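/- Let n = 2^(2^ν) + 1 be prime with ν ≥ 2, assume that 2 and 3 together generate the group of units of ZMod n, put ng = 2^(2^ν − (ν+1)) and let ζ = exp(2πi/n). For a positive integer M dividing ng and 1 ≤ j ≤ M define the period F(j, M) = Σ_{t=0}^{ng/M − 1} Σ_{i=0}^{2^(ν+1) − 1} ζ^(3^(j−1+tM) · 2^i). Define ρ(a,b) = b if b divides a, and the remainder of a divided by b otherwise. Then for every m with 2^(m+1) dividing ng there exist integers μ(1), ..., μ(2^m) such that for every j with 1 ≤ j ≤ 2^m one has F(j, 2^(m+1)) · F(j + 2^m, 2^(m+1)) = Σ_{k=1}^{2^m} μ(k) · F(ρ(k + j − 1, 2^m), 2^m). -/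

import Mathlib

/-- `ρ(a, b) = b` if `b ∣ a`, and the remainder of `a` divided by `b` otherwise. -/
def rho (a b : ℕ) : ℕ := if b ∣ a then b else a % b

/-- The Gaussian period `F(j, M)`: the sum of `ζ ^ (3 ^ (j - 1 + t * M) * 2 ^ i)` for
`0 ≤ t < ng / M` and `0 ≤ i < 2 ^ (ν + 1)`, where `ζ = exp (2 π i / n)`. -/
noncomputable def per (n ν ng j M : ℕ) : ℂ :=
  ∑ t ∈ Finset.range (ng / M), ∑ i ∈ Finset.range (2 ^ (ν + 1)),
    Complex.exp (2 * Real.pi * Complex.I / n) ^ (3 ^ (j - 1 + t * M) * 2 ^ i)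

/-!
Since `3` generates the cyclic group `(ZMod n)ˣ` and `2`, `3 ^ ng` both have order `2 ^ (ν + 1)`,
they generate the same subgroup, so `F(j, M)` is the Gaussian period
`∑_{h ∈ H_M} ζ ^ (3 ^ (j - 1) * h)` of the subgroup `H_M` of index `M`.
Multiplying out `F(j, 2M) * F(j + M, 2M)` gives `∑_z c(z) ζ ^ (3 ^ (j - 1) * z)`, where `c(z)`
counts the pairs `x, y ∈ H_{2M}` with `x + 3 ^ M * y = z`. The substitution
`(x, y) ↦ (3 ^ (2M) * y, x)` shows `c(3 ^ M * z) = c(z)`, so `c` is constant on the cosets of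
`H_M`, and `c(0) = 0` because `-1 ∈ H_{2M}` (as `2 ^ 2 ^ ν = -1`) while `3 ^ M ∉ H_{2M}`.
Grouping the sum by cosets of `H_M` gives `μ(k) = c(3 ^ (k - 1))`.
-/

open Finset Subgroup

section CyclicGroup

variable {G β : Type*} [AddCommMonoid β]

theorem sum_range_mul_eq_sum_sum (f : ℕ → β) (a b : ℕ) :
    ∑ e ∈ range (a * b), f e = ∑ k ∈ range a, ∑ r ∈ range b, f (k + a * r) := by
  induction b with
  | zero => simp
  | succ b ih =>
    rw [mul_add_one, sum_range_add, ih, ← sum_add_distrib]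
    refine sum_congr rfl fun k _ => ?_
    rw [sum_range_succ, add_comm (a * b) k]

theorem sum_range_orderOf_pow [Group G] {x : G} (hx : IsOfFinOrder x) [Fintype (zpowers x)]
    (f : G → β) : ∑ i ∈ range (orderOf x), f (x ^ i) = ∑ h : zpowers x, f h := by
  rw [← Fin.sum_univ_eq_sum_range (fun i => f (x ^ i))]
  exact Fintype.sum_equiv (finEquivZPowers hx) _ _ fun _ => rfl

theorem sum_range_orderOf_pow_congr [Group G] [Fintype G] [DecidableEq G] {x y : G}
    (h : zpowers x = zpowers y) (f : G → β) :
    ∑ i ∈ range (orderOf x), f (x ^ i) = ∑ i ∈ range (orderOf y), f (y ^ i) := by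
  rw [sum_range_orderOf_pow (isOfFinOrder_of_finite x),
    sum_range_orderOf_pow (isOfFinOrder_of_finite y)]
  exact Fintype.sum_equiv (MulEquiv.subgroupCongr h).toEquiv _ _ fun _ => rfl

theorem zpowers_eq_zpowers_of_orderOf_eq [CommGroup G] [IsCyclic G] [Finite G] {x y : G}
    (h : orderOf x = orderOf y) : zpowers x = zpowers y := by
  have hker (z : G) : zpowers z = (powMonoidHom (orderOf z) : G →* G).ker :=
    eq_of_le_of_card_ge (zpowers_le_of_mem (pow_orderOf_eq_one z))
      (by rw [IsCyclic.card_powMonoidHom_ker, Nat.card_zpowers,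
        Nat.gcd_eq_right (orderOf_dvd_natCard z)])
  rw [hker x, hker y, h]

theorem orderOf_pow_of_card_eq_mul [Group G] [Fintype G] {g : G} (hg : ∀ x, x ∈ zpowers g)
    {d L : ℕ} (hcard : Fintype.card G = d * L) : orderOf (g ^ d) = L := by
  have hN : orderOf g = d * L := by
    rw [orderOf_eq_card_of_forall_mem_zpowers hg, Nat.card_eq_fintype_card, hcard]
  have hd : 0 < d :=
    Nat.pos_of_ne_zero fun h => Fintype.card_ne_zero (α := G) (by simp [hcard, h])
  rw [orderOf_pow_of_dvd hd.ne' (hN ▸ dvd_mul_right d L), hN, Nat.mul_div_cancel_left L hd]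

theorem sum_eq_sum_range_sum_zpowers [Group G] [Fintype G] [DecidableEq G] {g : G}
    (hg : ∀ x, x ∈ zpowers g) {M : ℕ} (hM : M ∣ Fintype.card G) (F : G → β) :
    ∑ z, F z = ∑ k ∈ range M, ∑ h : zpowers (g ^ M), F (g ^ k * h) := by
  obtain ⟨R, hR⟩ := hM
  have hN : orderOf g = M * R := by
    rw [orderOf_eq_card_of_forall_mem_zpowers hg, Nat.card_eq_fintype_card, hR]
  have hgM : orderOf (g ^ M) = R := orderOf_pow_of_card_eq_mul hg hR
  calc ∑ z, F z = ∑ h : zpowers g, F h :=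
        (Fintype.sum_equiv (Equiv.subtypeUnivEquiv hg) _ _ fun _ => rfl).symm
    _ = ∑ k ∈ range M, ∑ r ∈ range R, F (g ^ k * (g ^ M) ^ r) := by
        rw [← sum_range_orderOf_pow (isOfFinOrder_of_finite g), hN, sum_range_mul_eq_sum_sum]
        simp only [pow_add, pow_mul]
    _ = _ := by
        refine sum_congr rfl fun k _ => ?_
        rw [← hgM, sum_range_orderOf_pow (isOfFinOrder_of_finite _) (fun h => F (g ^ k * h))]

theorem sum_range_sum_range_pow_mul_pow_eq_sum_zpowers [CommGroup G] [Fintype G] [DecidableEq G]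
    {g t : G} (hg : ∀ x, x ∈ zpowers g) {T M : ℕ} (hcard : Fintype.card G = T * M * orderOf t)
    (F : G → β) :
    ∑ i ∈ range T, ∑ l ∈ range (orderOf t), F (g ^ (i * M) * t ^ l) =
      ∑ h : zpowers (g ^ M), F h := by
  have : IsCyclic G := ⟨⟨g, hg⟩⟩
  have hTM : orderOf (g ^ (T * M)) = orderOf t := orderOf_pow_of_card_eq_mul hg hcard
  have hgM : orderOf (g ^ M) = T * orderOf t :=
    orderOf_pow_of_card_eq_mul hg (by rw [hcard]; ring)
  have hzp : zpowers t = zpowers (g ^ (T * M)) := zpowers_eq_zpowers_of_orderOf_eq hTM.symm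
  calc ∑ i ∈ range T, ∑ l ∈ range (orderOf t), F (g ^ (i * M) * t ^ l)
      = ∑ i ∈ range T, ∑ l ∈ range (orderOf t), F ((g ^ M) ^ (i + T * l)) := by
        refine sum_congr rfl fun i _ => ?_
        rw [sum_range_orderOf_pow_congr hzp (fun h => F (g ^ (i * M) * h)), hTM]
        refine sum_congr rfl fun l _ => ?_
        rw [← pow_mul, ← pow_mul, ← pow_add]
        ring_nf
    _ = ∑ h : zpowers (g ^ M), F h := by
        rw [← sum_range_mul_eq_sum_sum (fun r => F ((g ^ M) ^ r)), ← hgM,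
          sum_range_orderOf_pow (isOfFinOrder_of_finite _)]

theorem zpowers_le_zpowers_pow_of_card_eq_mul [CommGroup G] [Fintype G] {g t : G}
    (hg : ∀ x, x ∈ zpowers g) {d M : ℕ} (hcard : Fintype.card G = d * orderOf t)
    (hM : M ∣ d) :
    zpowers t ≤ zpowers (g ^ M) := by
  have : IsCyclic G := ⟨⟨g, hg⟩⟩
  rw [zpowers_eq_zpowers_of_orderOf_eq (orderOf_pow_of_card_eq_mul hg hcard).symm]
  obtain ⟨c, rfl⟩ := hM
  exact zpowers_le_of_mem (by rw [pow_mul]; exact npow_mem_zpowers _ c)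

theorem pow_notMem_zpowers_pow_two_mul [Group G] {g : G} {M : ℕ} (hM : M ≠ 0)
    (h : 2 * M ∣ orderOf g) : g ^ M ∉ zpowers (g ^ (2 * M)) := by
  intro hmem
  obtain ⟨k, hk⟩ := mem_zpowers_iff.1 hmem
  have hone : g ^ (((2 * M : ℕ) : ℤ) * k - M) = 1 := by
    rw [zpow_sub, zpow_mul, zpow_natCast, hk, zpow_natCast, mul_inv_cancel]
  obtain ⟨c, hc⟩ := (Int.natCast_dvd_natCast.2 h).trans (orderOf_dvd_iff_zpow_eq_one.2 hone)
  have : (M : ℤ) * (2 * k - 1 - 2 * c) = 0 := by push_cast at hc; linarith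
  have := (mul_eq_zero.1 this).resolve_left (by exact_mod_cast hM)
  omega

end CyclicGroup

theorem sum_units_eq_sum_of_map_zero {K M : Type*} [GroupWithZero K] [Fintype K] [DecidableEq K]
    [AddCommMonoid M] {f : K → M} (h0 : f 0 = 0) : ∑ u : Kˣ, f u = ∑ z, f z := by
  refine (sum_map univ ⟨_, Units.val_injective⟩ f).symm.trans
    (sum_subset (subset_univ _) fun z _ hz => ?_)
  by_contra hfz
  exact hz (mem_map.2 ⟨Units.mk0 z fun h => hfz (h ▸ h0), mem_univ _, rfl⟩)

section GaussPeriod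

variable {K R : Type*} [Ring K] [CommSemiring R] (ψ : AddChar K R)

noncomputable def gaussPeriod (H : Subgroup Kˣ) [Fintype H] (a : K) : R :=
  ∑ h : H, ψ (a * ((h : Kˣ) : K))

theorem gaussPeriod_mul_of_mem {H : Subgroup Kˣ} [Fintype H] (a : K) {h : Kˣ}
    (hh : h ∈ H) : gaussPeriod ψ H (a * h) = gaussPeriod ψ H a :=
  Fintype.sum_equiv (Equiv.mulLeft ⟨h, hh⟩) _ _ fun x => by simp [mul_assoc]

def pairCount [DecidableEq K] (H : Subgroup Kˣ) [Fintype H] (w : Kˣ) (z : K) : ℕ :=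
  #{p : H × H | ((p.1 : Kˣ) : K) + w * ((p.2 : Kˣ) : K) = z}

theorem gaussPeriod_mul_gaussPeriod [Fintype K] [DecidableEq K] (H : Subgroup Kˣ)
    [Fintype H] (w : Kˣ) (a : K) :
    gaussPeriod ψ H a * gaussPeriod ψ H (a * w) = ∑ z, pairCount H w z • ψ (a * z) := by
  rw [gaussPeriod, gaussPeriod, sum_mul_sum, ← Fintype.sum_prod_type',
    ← sum_fiberwise univ (fun p : H × H => ((p.1 : Kˣ) : K) + w * ((p.2 : Kˣ) : K))]
  refine sum_congr rfl fun z _ => ?_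
  rw [pairCount, ← sum_const]
  refine sum_congr rfl fun p hp => ?_
  rw [← (mem_filter.1 hp).2, ← AddChar.map_add_eq_mul, mul_add, mul_assoc]

theorem pairCount_mul_left [DecidableEq K] {H : Subgroup Kˣ} [Fintype H] {w : Kˣ}
    (hw : w ^ 2 ∈ H) (z : K) : pairCount H w (w * z) = pairCount H w z := by
  refine (card_equiv ((Equiv.prodComm H H).trans
    (Equiv.prodCongr (Equiv.mulLeft ⟨w ^ 2, hw⟩) (Equiv.refl H))) fun p => ?_).symm
  simp only [mem_filter, mem_univ, true_and, Equiv.trans_apply, Equiv.prodComm_apply,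
    Equiv.prodCongr_apply, Prod.map, Equiv.coe_mulLeft, Equiv.refl_apply, Prod.fst_swap,
    Prod.snd_swap, Subgroup.coe_mul, Units.val_mul, Units.val_pow_eq_pow_val]
  rw [show (w : K) ^ 2 * ((p.2 : Kˣ) : K) + w * ((p.1 : Kˣ) : K) =
    w * (((p.1 : Kˣ) : K) + w * ((p.2 : Kˣ) : K)) by noncomm_ring, Units.mul_right_inj]

theorem pairCount_pow_mul [DecidableEq K] {H : Subgroup Kˣ} [Fintype H] {w : Kˣ}
    (hw : w ^ 2 ∈ H) (r : ℕ) (z : K) : pairCount H w ((w ^ r : Kˣ) * z) = pairCount H w z := by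
  induction r with
  | zero => simp
  | succ r ih => rw [pow_succ', Units.val_mul, mul_assoc, pairCount_mul_left hw, ih]

theorem pairCount_zero [DecidableEq K] {H : Subgroup Kˣ} [Fintype H] {w : Kˣ}
    (hneg : -1 ∈ H) (hw : w ∉ H) : pairCount H w 0 = 0 := by
  refine card_eq_zero.2 (filter_eq_empty_iff.2 fun p _ hp => hw ?_)
  have hwy : w * p.2 = -1 * p.1 := Units.ext (by simpa using eq_neg_of_add_eq_zero_right hp)
  rw [← mul_inv_eq_iff_eq_mul.2 hwy.symm]
  exact mul_mem (mul_mem hneg p.1.2) (inv_mem p.2.2)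

end GaussPeriod

theorem exists_gaussPeriod_mul_gaussPeriod_eq_sum {K R : Type*} [Field K] [Fintype K]
    [DecidableEq K] [CommSemiring R] (ψ : AddChar K R) {g : Kˣ} (hg : ∀ x, x ∈ zpowers g)
    {M : ℕ} (hM : 2 * M ∣ Fintype.card Kˣ)
    (hneg : -1 ∈ zpowers (g ^ (2 * M))) :
    ∃ μ : ℕ → ℕ, ∀ a : K,
      gaussPeriod ψ (zpowers (g ^ (2 * M))) a *
          gaussPeriod ψ (zpowers (g ^ (2 * M))) (a * ↑(g ^ M)) =
        ∑ k ∈ range M, μ k • gaussPeriod ψ (zpowers (g ^ M)) (a * ↑(g ^ k)) := by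
  have hM0 : M ≠ 0 := by
    rintro rfl
    exact Fintype.card_ne_zero (α := Kˣ) (Nat.eq_zero_of_zero_dvd hM)
  have hw : g ^ M ∉ zpowers (g ^ (2 * M)) := pow_notMem_zpowers_pow_two_mul hM0
    (by rwa [orderOf_eq_card_of_forall_mem_zpowers hg, Nat.card_eq_fintype_card])
  have hw2 : (g ^ M) ^ 2 ∈ zpowers (g ^ (2 * M)) := by
    rw [← pow_mul, mul_comm]; exact mem_zpowers _
  refine ⟨fun k => pairCount (zpowers (g ^ (2 * M))) (g ^ M) ↑(g ^ k), fun a => ?_⟩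
  rw [gaussPeriod_mul_gaussPeriod,
    ← sum_units_eq_sum_of_map_zero (by simp [pairCount_zero hneg hw]),
    sum_eq_sum_range_sum_zpowers hg (dvd_of_mul_left_dvd hM)]
  refine sum_congr rfl fun k _ => ?_
  rw [gaussPeriod, smul_sum]
  refine sum_congr rfl fun h _ => ?_
  obtain ⟨r, hr : (g ^ M) ^ r = h⟩ :=
    (isOfFinOrder_of_finite _).mem_powers_iff_mem_zpowers.2 h.2
  rw [Units.val_mul, ← hr, mul_assoc a]
  congr 1
  rw [mul_comm ((g ^ k : Kˣ) : K), pairCount_pow_mul hw2]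

theorem forall_mem_zpowers_of_closure_pair_eq_top {G : Type*} [CommGroup G] [IsCyclic G]
    [Finite G] {p k : ℕ} [Fact p.Prime] (hcard : Nat.card G = p ^ (k + 1)) {x y : G}
    (hxy : closure {x, y} = ⊤) (hx : orderOf x ≠ p ^ (k + 1)) : ∀ z, z ∈ zpowers y := by
  have hxk : x ^ p ^ k = 1 := by
    obtain ⟨i, hi, hxi⟩ := (Nat.dvd_prime_pow Fact.out).1 (hcard ▸ orderOf_dvd_natCard x)
    have hik : i ≤ k := by
      by_contra hik
      exact hx (by rw [hxi, show i = k + 1 by omega])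
    exact orderOf_dvd_iff_pow_eq_one.1 (hxi ▸ Nat.pow_dvd_pow p hik)
  have hyk : ¬y ^ p ^ k = 1 := by
    intro hyk
    have hker : closure {x, y} ≤ (powMonoidHom (p ^ k) : G →* G).ker :=
      (closure_le _).2 (Set.insert_subset_iff.2 ⟨hxk, Set.singleton_subset_iff.2 hyk⟩)
    have hexp := Monoid.exponent_dvd_of_forall_pow_eq_one fun z => hker (hxy ▸ mem_top z)
    rw [IsCyclic.exponent_eq_card, hcard,
      Nat.pow_dvd_pow_iff_le_right (Fact.out : p.Prime).one_lt] at hexp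
    omega
  have hy : orderOf y = Nat.card G :=
    hcard ▸ orderOf_eq_prime_pow hyk (hcard ▸ pow_card_eq_one')
  intro z
  rw [(zpowers y).eq_top_of_card_eq (by rw [Nat.card_zpowers, hy])]
  exact mem_top z

theorem two_pow_two_pow_eq_neg_one {ν n : ℕ} (hn : n = 2 ^ 2 ^ ν + 1) :
    (2 : ZMod n) ^ 2 ^ ν = -1 := by
  have h : ((2 ^ 2 ^ ν + 1 : ℕ) : ZMod n) = 0 := by rw [← hn, ZMod.natCast_self]
  push_cast at h
  exact eq_neg_of_add_eq_zero_left h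

theorem add_one_lt_two_pow {ν : ℕ} (hν : 2 ≤ ν) : ν + 1 < 2 ^ ν := by
  induction ν, hν using Nat.le_induction with
  | base => norm_num
  | succ k _ ih => rw [pow_succ]; omega

theorem orderOf_eq_two_pow_of_pow_eq_neg_one {R : Type*} [Ring R] (h : (-1 : R) ≠ 1) {ν : ℕ}
    {t : Rˣ} (ht : t ^ 2 ^ ν = -1) : orderOf t = 2 ^ (ν + 1) := by
  refine orderOf_eq_prime_pow (fun h1 => h ?_) ?_
  · simpa [ht] using congrArg Units.val h1
  · rw [pow_succ, pow_mul, ht, neg_one_sq]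

theorem exists_units_three_two_of_fermat {ν n : ℕ} [Fact n.Prime] (hν : 2 ≤ ν)
    (hn : n = 2 ^ 2 ^ ν + 1)
    (hgen : Subgroup.closure {u : (ZMod n)ˣ | (u : ZMod n) = 2 ∨ (u : ZMod n) = 3} = ⊤) :
    ∃ g t : (ZMod n)ˣ, (g : ZMod n) = 3 ∧ (t : ZMod n) = 2 ∧ (∀ x, x ∈ zpowers g) ∧
      orderOf t = 2 ^ (ν + 1) ∧ t ^ 2 ^ ν = -1 := by
  have h2 := two_pow_two_pow_eq_neg_one hn
  have h4 : 4 < 2 ^ 2 ^ ν :=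
    (Nat.pow_le_pow_right two_pos hν : 2 ^ 2 ≤ 2 ^ ν).trans_lt Nat.lt_two_pow_self
  have : Fact (2 < n) := ⟨by omega⟩
  let t := Units.mk0 (2 : ZMod n) fun h => by simp [h] at h2
  have htν : t ^ 2 ^ ν = -1 := Units.ext (by simpa [t] using h2)
  have ht := orderOf_eq_two_pow_of_pow_eq_neg_one ZMod.neg_one_ne_one htν
  have h3 : (3 : ZMod n) ≠ 0 := by
    rw [← Nat.cast_ofNat, Ne, ZMod.natCast_eq_zero_iff]
    intro hd
    have := Nat.le_of_dvd (by norm_num) hd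
    omega
  let g := Units.mk0 (3 : ZMod n) h3
  have hset : {u : (ZMod n)ˣ | (u : ZMod n) = 2 ∨ (u : ZMod n) = 3} = {t, g} := by
    ext u
    simp [Units.ext_iff, t, g]
  have hcard : Nat.card (ZMod n)ˣ = 2 ^ (2 ^ ν - 1 + 1) := by
    rw [Nat.card_eq_fintype_card, ZMod.card_units, hn, Nat.sub_add_cancel Nat.one_le_two_pow]
    rfl
  refine ⟨g, t, rfl, rfl, forall_mem_zpowers_of_closure_pair_eq_top hcard (hset ▸ hgen) ?_, ht,
    htν⟩
  rw [ht]
  intro h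
  have := Nat.pow_right_injective le_rfl h
  have := add_one_lt_two_pow hν
  omega

theorem exp_pow_eq_stdAddChar (n : ℕ) [NeZero n] (N : ℕ) :
    Complex.exp (2 * Real.pi * Complex.I / n) ^ N = ZMod.stdAddChar (N : ZMod n) := by
  rw [← Int.cast_natCast (R := ZMod n), ZMod.stdAddChar_coe, ← Complex.exp_nat_mul]
  congr 1
  push_cast
  ring

theorem per_eq_gaussPeriod {ν n ng M : ℕ} [NeZero n] {g t : (ZMod n)ˣ} (hg3 : (g : ZMod n) = 3)
    (ht2 : (t : ZMod n) = 2) (hg : ∀ x, x ∈ zpowers g) (ht : orderOf t = 2 ^ (ν + 1))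
    (hcard : Fintype.card (ZMod n)ˣ = ng * orderOf t) (hM : M ∣ ng) (j : ℕ) :
    per n ν ng j M = gaussPeriod ZMod.stdAddChar (zpowers (g ^ M)) ↑(g ^ (j - 1)) := by
  obtain ⟨T, rfl⟩ := hM
  have hM0 : 0 < M :=
    Nat.pos_of_ne_zero fun h => Fintype.card_ne_zero (α := (ZMod n)ˣ) (by simp [hcard, h])
  rw [per, Nat.mul_div_cancel_left T hM0, gaussPeriod,
    ← sum_range_sum_range_pow_mul_pow_eq_sum_zpowers hg (T := T) (by rw [hcard]; ring)
      (fun h => ZMod.stdAddChar (((g ^ (j - 1) : (ZMod n)ˣ) : ZMod n) * (h : ZMod n))), ← ht]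
  refine sum_congr rfl fun i _ => sum_congr rfl fun l _ => ?_
  rw [exp_pow_eq_stdAddChar]
  congr 1
  push_cast [hg3, ht2]
  ring

theorem rho_sub_one {a : ℕ} (ha : 0 < a) (b : ℕ) : rho a b - 1 = (a - 1) % b := by
  rcases Nat.eq_zero_or_pos b with rfl | hb
  · simp [rho, ha.ne']
  unfold rho
  split_ifs with hdvd
  · obtain ⟨q, rfl⟩ := hdvd
    obtain ⟨q, rfl⟩ := Nat.exists_eq_add_of_lt (Nat.pos_of_mul_pos_left ha)
    rw [show b * (0 + q + 1) - 1 = b - 1 + b * q by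
        rw [zero_add, mul_add_one]; generalize b * q = x; omega,
      Nat.add_mul_mod_self_left, Nat.mod_eq_of_lt (a := b - 1) (by omega)]
  · have hr : a % b ≠ 0 := fun h => hdvd (Nat.dvd_of_mod_eq_zero h)
    conv_rhs => rw [← Nat.div_add_mod a b]
    rw [show b * (a / b) + a % b - 1 = a % b - 1 + b * (a / b) by
        generalize b * (a / b) = x; omega,
      Nat.add_mul_mod_self_left,
      Nat.mod_eq_of_lt (a := a % b - 1) (by have := Nat.mod_lt a hb; omega)]

theorem gaussPeriod_pow_mod {K R : Type*} [Ring K] [CommSemiring R] (ψ : AddChar K R) (g : Kˣ)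
    (M e : ℕ) [Fintype (zpowers (g ^ M))] :
    gaussPeriod ψ (zpowers (g ^ M)) ↑(g ^ (e % M)) =
      gaussPeriod ψ (zpowers (g ^ M)) ↑(g ^ e) := by
  conv_rhs => rw [← Nat.mod_add_div e M, pow_add, pow_mul, Units.val_mul,
    gaussPeriod_mul_of_mem ψ _ (pow_mem (mem_zpowers _) _)]

/-- For a Fermat prime `n = 2 ^ 2 ^ ν + 1` (`ν ≥ 2`) such that `2` and `3`
generate `(ZMod n)ˣ`, with `ng = 2 ^ (2 ^ ν - (ν + 1))`: for every `m` with `2 ^ (m + 1) ∣ ng`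
there are integers `μ 1, …, μ (2 ^ m)` such that for all `1 ≤ j ≤ 2 ^ m`,
`F(j, 2 ^ (m + 1)) * F(j + 2 ^ m, 2 ^ (m + 1)) = ∑ k, μ k * F(ρ(k + j - 1, 2 ^ m), 2 ^ m)`. -/
theorem stmt7 (ν n : ℕ) (hν : 2 ≤ ν) (hn : n = 2 ^ (2 ^ ν) + 1) (hp : n.Prime)
    (hgen : Subgroup.closure {u : (ZMod n)ˣ | (u : ZMod n) = 2 ∨ (u : ZMod n) = 3} = ⊤)
    (ng : ℕ) (hng : ng = 2 ^ (2 ^ ν - (ν + 1))) :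
    ∀ m : ℕ, 2 ^ (m + 1) ∣ ng →
      ∃ μ : ℕ → ℤ, ∀ j : ℕ, 1 ≤ j → j ≤ 2 ^ m →
        per n ν ng j (2 ^ (m + 1)) * per n ν ng (j + 2 ^ m) (2 ^ (m + 1)) =
          ∑ k ∈ Finset.Icc 1 (2 ^ m),
            (μ k : ℂ) * per n ν ng (rho (k + j - 1) (2 ^ m)) (2 ^ m) := by
  intro m hm
  have : Fact n.Prime := ⟨hp⟩
  obtain ⟨g, t, hg3, ht2, hg, ht, htν⟩ := exists_units_three_two_of_fermat hν hn hgen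
  have hcard : Fintype.card (ZMod n)ˣ = ng * orderOf t := by
    rw [ZMod.card_units, ht, hng, ← pow_add, Nat.sub_add_cancel Nat.lt_two_pow_self, hn,
      Nat.add_sub_cancel]
  have hper {M : ℕ} (hM : M ∣ ng) := per_eq_gaussPeriod hg3 ht2 hg ht hcard hM
  rw [pow_succ'] at hm ⊢
  have hneg : -1 ∈ zpowers (g ^ (2 * 2 ^ m)) :=
    zpowers_le_zpowers_pow_of_card_eq_mul hg hcard hm (htν ▸ npow_mem_zpowers t _)
  obtain ⟨μ, hμ⟩ := exists_gaussPeriod_mul_gaussPeriod_eq_sum ZMod.stdAddChar hg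
    (hcard ▸ dvd_mul_of_dvd_left hm _) hneg
  refine ⟨fun k => μ (k - 1), fun j hj _ => ?_⟩
  rw [hper hm, hper hm, show j + 2 ^ m - 1 = j - 1 + 2 ^ m by omega, pow_add, Units.val_mul, hμ,
    ← Ico_add_one_right_eq_Icc, sum_Ico_eq_sum_range, add_tsub_cancel_right]
  refine sum_congr rfl fun k _ => ?_
  rw [hper (dvd_of_mul_left_dvd hm), rho_sub_one (by omega), gaussPeriod_pow_mod, ← Units.val_mul,
    ← pow_add, nsmul_eq_mul, Int.cast_natCast, show 1 + k + j - 1 - 1 = j - 1 + k by omega,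
    add_tsub_cancel_left]
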